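/- Let λ: R' → R be a surjective semiring homomorphism, φ: V' → V a surjective λ-semilinear map from a free R'-module V' to an R-module V, and (q, b) a balanced quadratic pair on V. Then (q, b) lifts to a balanced quadratic pair (q', b') on V', i.e., λ ∘ q' = q ∘ φ, λ ∘ b' = b ∘ (φ × φ), and b'(x',x') = 2q'(x') for all x' ∈ V'. -/

import Mathlib

/-!
Fix a well-order on the index set `I` of the basis `ε'` and write `vᵢ = φ (ε' i)`. Lift the
values `q vᵢ` onto the diagonal and `b vᵢ vⱼ` (for `i < j`) above the diagonal of a triangular
matrix `D` over `R'`, and let `B` be the (non-symmetric) bilinear form on `V'` with matrix `D`.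
Then `q' x = B x x` and `b' x y = B x y + B y x` form a balanced quadratic pair. Both
`lam (b' x y)` and `b (φ x) (φ y)` are `lam`-semilinear in each argument and agree on pairs of
basis vectors (on the diagonal because `(q, b)` is balanced), so they agree everywhere; the
companion identities then propagate `lam (q' x) = q (φ x)` from the basis to all of `V'`.
-/

/-- A (not necessarily symmetric) `R`-bilinear form on `V`. -/
def IsBilin {R : Type*} [CommSemiring R] {V : Type*} [AddCommMonoid V] [Module R V]
    (b : V → V → R) : Prop :=
  (∀ x y z : V, b (x + y) z = b x z + b y z) ∧
  (∀ x y z : V, b x (y + z) = b x y + b x z) ∧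
  (∀ (c : R) (x y : V), b (c • x) y = c * b x y) ∧
  (∀ (c : R) (x y : V), b x (c • y) = c * b x y)

/-- `b` is a (symmetric bilinear) companion of `q`. -/
def IsCompanion {R : Type*} [CommSemiring R] {V : Type*} [AddCommMonoid V] [Module R V]
    (q : V → R) (b : V → V → R) : Prop :=
  IsBilin b ∧ (∀ x y : V, b x y = b y x) ∧ ∀ x y : V, q (x + y) = q x + q y + b x y

/-- `q` is a quadratic form: homogeneous of degree 2 and admitting some companion. -/
def IsQuadForm {R : Type*} [CommSemiring R] {V : Type*} [AddCommMonoid V] [Module R V]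
    (q : V → R) : Prop :=
  (∀ (c : R) (x : V), q (c • x) = c ^ 2 * q x) ∧ ∃ b, IsCompanion q b

variable {R : Type*} [CommSemiring R] {V : Type*} [AddCommMonoid V] [Module R V]

open Module

lemma isCompanion_diag_add_flip (B : V →ₗ[R] V →ₗ[R] R) :
    IsCompanion (fun x => B x x) (fun x y => B x y + B y x) := by
  refine ⟨⟨?_, ?_, ?_, ?_⟩, ?_, ?_⟩ <;> intros <;> simp <;> ring

lemma exists_triangular_lift {R' I : Type*} [CommSemiring R'] (lam : R' →+* R)
    (hlam : Function.Surjective lam) (Q : I → R) (P : I → I → R)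
    (hP : ∀ i j, P i j = P j i) :
    ∃ D : I → I → R', (∀ i, lam (D i i) = Q i) ∧
      ∀ i j, i ≠ j → lam (D i j + D j i) = P i j := by
  classical
  let : LinearOrder I := IsWellOrder.linearOrder WellOrderingRel
  choose d hd using fun i => hlam (Q i)
  choose e he using fun i j => hlam (P i j)
  refine ⟨fun i j => if i = j then d i else if i < j then e i j else 0, fun i => by simp [hd],
    fun i j hij => ?_⟩
  rcases hij.lt_or_gt with h | h
  · simp [hij, hij.symm, h, h.not_gt, he]
  · simp [hij, hij.symm, h, h.not_gt, he, hP j i]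

section Semilinear

variable {R' V' I : Type*} [CommSemiring R'] [AddCommMonoid V'] [Module R' V']
  {lam : R' →+* R} (ε : Basis I R' V') (φ : V' →ₛₗ[lam] V) (B : V' →ₗ[R'] V' →ₗ[R'] R')

lemma map_add_flip_eq_of_basis {b : V → V → R} (hb : IsBilin b)
    (h : ∀ i j, lam (B (ε i) (ε j) + B (ε j) (ε i)) = b (φ (ε i)) (φ (ε j))) (x y : V') :
    lam (B x y + B y x) = b (φ x) (φ y) := by
  let lhs : V' →ₛₗ[lam] V' →ₛₗ[lam] R := LinearMap.mk₂'ₛₗ lam lam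
    (fun x y => lam (B x y + B y x))
    (fun _ _ _ => by simp only [map_add, LinearMap.add_apply]; ring)
    (fun _ _ _ => by simp only [map_smul, LinearMap.smul_apply, smul_eq_mul, ← mul_add, map_mul])
    (fun _ _ _ => by simp only [map_add, LinearMap.add_apply]; ring)
    (fun _ _ _ => by simp only [map_smul, LinearMap.smul_apply, smul_eq_mul, ← mul_add, map_mul])
  let rhs : V' →ₛₗ[lam] V' →ₛₗ[lam] R := LinearMap.mk₂'ₛₗ lam lam
    (fun x y => b (φ x) (φ y))
    (fun _ _ _ => by simp only [map_add, hb.1])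
    (fun _ _ _ => by simp only [map_smulₛₗ, hb.2.2.1, smul_eq_mul])
    (fun _ _ _ => by simp only [map_add, hb.2.1])
    (fun _ _ _ => by simp only [map_smulₛₗ, hb.2.2.2, smul_eq_mul])
  exact LinearMap.congr_fun₂ (LinearMap.ext_basis ε ε (B := lhs) (B' := rhs) h) x y

lemma map_diag_eq_of_basis {q : V → R} {b : V → V → R}
    (hq : ∀ (c : R) (x : V), q (c • x) = c ^ 2 * q x) (hb : IsCompanion q b)
    (hpolar : ∀ x y, lam (B x y + B y x) = b (φ x) (φ y))
    (hdiag : ∀ i, lam (B (ε i) (ε i)) = q (φ (ε i))) (x : V') :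
    lam (B x x) = q (φ x) := by
  induction ε.mem_span x using Submodule.span_induction with
  | mem x hx =>
    obtain ⟨i, rfl⟩ := hx
    exact hdiag i
  | zero => simpa using (hq 0 0).symm
  | add x y _ _ hx hy =>
    calc lam (B (x + y) (x + y)) = lam (B x x) + lam (B y y) + lam (B x y + B y x) := by
          simp only [map_add, LinearMap.add_apply]; ring
      _ = q (φ (x + y)) := by rw [hx, hy, hpolar, map_add, hb.2.2]
  | smul c x _ hx =>
    simp only [map_smul, map_smulₛₗ, LinearMap.smul_apply, smul_eq_mul, map_mul, hq, ← hx]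
    ring

end Semilinear

theorem stmt9_general {R' : Type*} [CommSemiring R'] {V' : Type*} [AddCommMonoid V'] [Module R' V']
    {I : Type*} (lam : R' →+* R) (hlam : Function.Surjective lam)
    (ε' : Module.Basis I R' V') (φ : V' → V)
    (hadd : ∀ x y : V', φ (x + y) = φ x + φ y)
    (hsmul : ∀ (a : R') (x : V'), φ (a • x) = lam a • φ x)
    (q : V → R) (b : V → V → R)
    (hq : ∀ (c : R) (x : V), q (c • x) = c ^ 2 * q x)
    (hb : IsCompanion q b)
    (hbal : ∀ x : V, b x x = 2 * q x) :
    ∃ (q' : V' → R') (b' : V' → V' → R'),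
      (∀ (c : R') (x : V'), q' (c • x) = c ^ 2 * q' x) ∧
      IsCompanion q' b' ∧
      (∀ x' : V', b' x' x' = 2 * q' x') ∧
      (∀ x' : V', lam (q' x') = q (φ x')) ∧
      (∀ x' y' : V', lam (b' x' y') = b (φ x') (φ y')) := by
  let φₗ : V' →ₛₗ[lam] V := { toFun := φ, map_add' := hadd, map_smul' := hsmul }
  obtain ⟨D, hD_diag, hD_off⟩ := exists_triangular_lift lam hlam (fun i => q (φ (ε' i)))
    (fun i j => b (φ (ε' i)) (φ (ε' j))) fun i j => hb.2.1 _ _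
  let B : V' →ₗ[R'] V' →ₗ[R'] R' := ε'.constr R' fun i => ε'.constr R' fun j => D i j
  have hB : ∀ i j, B (ε' i) (ε' j) = D i j := by simp [B, Basis.constr_basis]
  have hpolar := map_add_flip_eq_of_basis ε' φₗ B hb.1 fun i j => by
    obtain rfl | hij := eq_or_ne i j
    · rw [hB, map_add, hD_diag]
      exact (two_mul _).symm.trans (hbal _).symm
    · rw [hB, hB, hD_off i j hij]
      rfl
  refine ⟨fun x => B x x, fun x y => B x y + B y x, fun c x => by
    simp only [map_smul, LinearMap.smul_apply, smul_eq_mul]; ring,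
    isCompanion_diag_add_flip B, fun x => (two_mul _).symm,
    map_diag_eq_of_basis ε' φₗ B hq hb hpolar fun i => ?_, hpolar⟩
  rw [hB, hD_diag]
  rfl

/-- Every balanced quadratic pair lifts through a surjective semilinear map from a free
module to a balanced quadratic pair. -/
theorem stmt9 {R' : Type*} [CommSemiring R'] {V' : Type*} [AddCommMonoid V'] [Module R' V']
    {I : Type*} (lam : R' →+* R) (hlam : Function.Surjective lam)
    (ε' : Module.Basis I R' V') (φ : V' → V)
    (hadd : ∀ x y : V', φ (x + y) = φ x + φ y)
    (hsmul : ∀ (a : R') (x : V'), φ (a • x) = lam a • φ x)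
    (hsurj : Function.Surjective φ)
    (q : V → R) (b : V → V → R)
    (hq : ∀ (c : R) (x : V), q (c • x) = c ^ 2 * q x)
    (hb : IsCompanion q b)
    (hbal : ∀ x : V, b x x = 2 * q x) :
    ∃ (q' : V' → R') (b' : V' → V' → R'),
      (∀ (c : R') (x : V'), q' (c • x) = c ^ 2 * q' x) ∧
      IsCompanion q' b' ∧
      (∀ x' : V', b' x' x' = 2 * q' x') ∧
      (∀ x' : V', lam (q' x') = q (φ x')) ∧
      (∀ x' y' : V', lam (b' x' y') = b (φ x') (φ y')) :=
  stmt9_general lam hlam ε' φ hadd hsmul q b hq hb hbal
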